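/- arXiv:1809.01101 — 8 statements merged into one kernel-verified Lean document; each statement's English description precedes it below -/
import Mathlib

section
/- Let f be a surjective isometry of the 1-Wasserstein space over a countable discrete metric space X. Then f maps Dirac measures to Dirac measures bijectively; i.e., there is a bijection σ : X → X with f(δ_x) = δ_{σ(x)} for all x ∈ X. -/
/-! Everything is expressed through the overlap `∑' x, min (μ x) (ν x)`, which the isometry
preserves on probability measures because `W₁ = 1 - overlap` and the overlap is at most `1`.
Dirac measures are exactly the probability measures `μ` such that any two probability measures
overlapping `μ` overlap each other: a measure charging two points `x ≠ y` fails this for `δ_x`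
and `δ_y`. Being defined by the overlap alone, this class is mapped onto itself by `f`, and the
induced bijection of the Diracs is a permutation of `X`. -/

open scoped ENNReal
open Function Set

theorem Set.BijOn.exists_perm_comp_eq {α β : Type*} {f : α → α} {g : β → α} (hg : Injective g)
    (h : BijOn f (range g) (range g)) : ∃ σ : Equiv.Perm β, ∀ b, f (g b) = g (σ b) := by
  let e := Equiv.ofInjective g hg
  refine ⟨e.trans ((h.equiv f).trans e.symm), fun b => ?_⟩
  simp only [Equiv.trans_apply, e, Equiv.apply_ofInjective_symm]
  rfl

namespace DiscreteWasserstein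

variable {X : Type*}

def probSimplex (X : Type*) : Set (X → ℝ≥0∞) := {μ | ∑' x, μ x = 1}

noncomputable def overlap (μ ν : X → ℝ≥0∞) : ℝ≥0∞ := ∑' x, min (μ x) (ν x)

def dirac [DecidableEq X] (x : X) : X → ℝ≥0∞ := fun y => if y = x then 1 else 0

lemma overlap_le_one {μ : X → ℝ≥0∞} (hμ : μ ∈ probSimplex X) (ν : X → ℝ≥0∞) :
    overlap μ ν ≤ 1 :=
  hμ ▸ ENNReal.tsum_le_tsum fun _ => min_le_left _ _

lemma overlap_ne_zero_iff {μ ν : X → ℝ≥0∞} : overlap μ ν ≠ 0 ↔ ∃ x, μ x ≠ 0 ∧ ν x ≠ 0 := by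
  simp [overlap, ENNReal.tsum_eq_zero]

section Dirac

variable [DecidableEq X]

lemma dirac_mem_probSimplex (x : X) : dirac x ∈ probSimplex X := tsum_ite_eq x 1

lemma dirac_injective : Injective (dirac : X → X → ℝ≥0∞) := fun x y h => by
  simpa [dirac] using congrFun h x

lemma overlap_dirac_ne_zero_iff {x : X} {ν : X → ℝ≥0∞} : overlap (dirac x) ν ≠ 0 ↔ ν x ≠ 0 := by
  simp [overlap_ne_zero_iff, dirac]

lemma eq_dirac_of_forall_ne {μ : X → ℝ≥0∞} (hμ : μ ∈ probSimplex X) {x : X}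
    (h : ∀ y ≠ x, μ y = 0) : μ = dirac x := by
  have hx : μ x = 1 := (tsum_eq_single x h).symm.trans hμ
  ext y
  by_cases hy : y = x
  · simp [dirac, hy, hx]
  · simp [dirac, hy, h y hy]

end Dirac

def IsOverlapAtom (μ : X → ℝ≥0∞) : Prop :=
  ∀ ν ∈ probSimplex X, ∀ ρ ∈ probSimplex X, overlap μ ν ≠ 0 → overlap μ ρ ≠ 0 → overlap ν ρ ≠ 0

lemma isOverlapAtom_dirac [DecidableEq X] (x : X) : IsOverlapAtom (dirac x) :=
  fun _ _ _ _ hν hρ =>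
    overlap_ne_zero_iff.2 ⟨x, overlap_dirac_ne_zero_iff.1 hν, overlap_dirac_ne_zero_iff.1 hρ⟩

lemma IsOverlapAtom.mem_range_dirac [DecidableEq X] {μ : X → ℝ≥0∞} (hμ : μ ∈ probSimplex X)
    (h : IsOverlapAtom μ) : μ ∈ range dirac := by
  obtain ⟨x, hx⟩ : ∃ x, μ x ≠ 0 := by
    by_contra! h0
    simp [probSimplex, h0] at hμ
  refine ⟨x, (eq_dirac_of_forall_ne hμ fun y hyx => ?_).symm⟩
  by_contra hy
  have hxy := h (dirac x) (dirac_mem_probSimplex x) (dirac y) (dirac_mem_probSimplex y)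
    (overlap_ne_zero_iff.2 ⟨x, hx, by simp [dirac]⟩)
    (overlap_ne_zero_iff.2 ⟨y, hy, by simp [dirac]⟩)
  simp [overlap_dirac_ne_zero_iff, dirac, Ne.symm hyx] at hxy

lemma isOverlapAtom_iff_mem_range_dirac [DecidableEq X] {μ : X → ℝ≥0∞}
    (hμ : μ ∈ probSimplex X) : IsOverlapAtom μ ↔ μ ∈ range dirac :=
  ⟨IsOverlapAtom.mem_range_dirac hμ, by rintro ⟨x, rfl⟩; exact isOverlapAtom_dirac x⟩

section OverlapPreserving

variable {f : (X → ℝ≥0∞) → (X → ℝ≥0∞)} (hf : BijOn f (probSimplex X) (probSimplex X))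
  (hov : ∀ μ ∈ probSimplex X, ∀ ν ∈ probSimplex X, overlap (f μ) (f ν) = overlap μ ν)
include hf hov

lemma isOverlapAtom_apply_iff {μ : X → ℝ≥0∞} (hμ : μ ∈ probSimplex X) :
    IsOverlapAtom (f μ) ↔ IsOverlapAtom μ := by
  constructor
  · intro h ν hν ρ hρ
    simpa only [hov _ hμ _ hν, hov _ hμ _ hρ, hov _ hν _ hρ] using
      h (f ν) (hf.mapsTo hν) (f ρ) (hf.mapsTo hρ)
  · intro h ν' hν' ρ' hρ'
    obtain ⟨ν, hν, rfl⟩ := hf.surjOn hν'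
    obtain ⟨ρ, hρ, rfl⟩ := hf.surjOn hρ'
    simpa only [hov _ hμ _ hν, hov _ hμ _ hρ, hov _ hν _ hρ] using h ν hν ρ hρ

lemma bijOn_range_dirac [DecidableEq X] : BijOn f (range dirac) (range dirac) := by
  have hdirac : ∀ μ ∈ probSimplex X, f μ ∈ range dirac ↔ μ ∈ range dirac := fun μ hμ => by
    rw [← isOverlapAtom_iff_mem_range_dirac hμ,
      ← isOverlapAtom_iff_mem_range_dirac (hf.mapsTo hμ), isOverlapAtom_apply_iff hf hov hμ]
  have hsub : range dirac ⊆ probSimplex X := range_subset_iff.2 dirac_mem_probSimplex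
  refine ⟨fun μ hμ => (hdirac μ (hsub hμ)).2 hμ, hf.injOn.mono hsub, fun ν hν => ?_⟩
  obtain ⟨μ, hμ, rfl⟩ := hf.surjOn (hsub hν)
  exact ⟨μ, (hdirac μ hμ).1 hν, rfl⟩

end OverlapPreserving

end DiscreteWasserstein

open DiscreteWasserstein in
theorem isometry_maps_diracs_to_diracs_general {X : Type*} [DecidableEq X]
    (f : (X → ℝ≥0∞) → (X → ℝ≥0∞))
    (hbij : Set.BijOn f {μ | ∑' x, μ x = 1} {μ | ∑' x, μ x = 1})
    (hiso : ∀ μ ν : X → ℝ≥0∞, (∑' x, μ x = 1) → (∑' x, ν x = 1) →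
      1 - ∑' x, min (f μ x) (f ν x) = 1 - ∑' x, min (μ x) (ν x)) :
    ∃ σ : Equiv.Perm X, ∀ x : X,
      f (fun y => if y = x then 1 else 0) = fun y => if y = σ x then 1 else 0 := by
  have hov : ∀ μ ∈ probSimplex X, ∀ ν ∈ probSimplex X, overlap (f μ) (f ν) = overlap μ ν :=
    fun μ hμ ν hν => (ENNReal.sub_right_inj ENNReal.one_ne_top
      (overlap_le_one (hbij.mapsTo hμ) _) (overlap_le_one hμ _)).1 (hiso μ ν hμ hν)
  exact (bijOn_range_dirac hbij hov).exists_perm_comp_eq dirac_injective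

/-- A surjective isometry f of the 1-Wasserstein space over a countable discrete
metric space X (|X| ≥ 2) maps Dirac measures to Dirac measures bijectively: there is a
bijection σ of X with f(δ_x) = δ_{σ x} for all x. -/
theorem isometry_maps_diracs_to_diracs {X : Type*} [Countable X] [DecidableEq X] [Nontrivial X]
    (f : (X → ℝ≥0∞) → (X → ℝ≥0∞))
    (hbij : Set.BijOn f {μ | ∑' x, μ x = 1} {μ | ∑' x, μ x = 1})
    (hiso : ∀ μ ν : X → ℝ≥0∞, (∑' x, μ x = 1) → (∑' x, ν x = 1) →
      1 - ∑' x, min (f μ x) (f ν x) = 1 - ∑' x, min (μ x) (ν x)) :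
    ∃ σ : Equiv.Perm X, ∀ x : X,
      f (fun y => if y = x then 1 else 0) = fun y => if y = σ x then 1 else 0 :=
  isometry_maps_diracs_to_diracs_general f hbij hiso
end

section
/- Let f be an isometric embedding (not necessarily surjective) of the 1-Wasserstein space over a countable discrete metric space X. Then f preserves disjointness of supports in both directions: S_μ ∩ S_ν = ∅ if and only if S_{f(μ)} ∩ S_{f(ν)} = ∅, where S_μ = {x : μ({x}) > 0}. -/
open scoped ENNReal

lemma min_tsum_le {X : Type*} (μ ν : X → ℝ≥0∞) (hμ : ∑' x, μ x = 1) :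
    ∑' x, min (μ x) (ν x) ≤ 1 := by
  calc ∑' x, min (μ x) (ν x) ≤ ∑' x, μ x := ENNReal.tsum_le_tsum fun x => min_le_left _ _
  _ = 1 := hμ

lemma disjoint_iff_min_zero {X : Type*} (μ ν : X → ℝ≥0∞) :
    {x | 0 < μ x} ∩ {x | 0 < ν x} = ∅ ↔ ∑' x, min (μ x) (ν x) = 0 := by
  rw [ENNReal.tsum_eq_zero, Set.eq_empty_iff_forall_notMem]
  simp only [Set.mem_inter_iff, Set.mem_setOf_eq, not_and]
  constructor
  · intro h x
    by_contra hx
    have hpos : 0 < min (μ x) (ν x) := pos_iff_ne_zero.mpr hx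
    exact h x (hpos.trans_le (min_le_left _ _)) (hpos.trans_le (min_le_right _ _))
  · intro h x h1 h2
    have := lt_min h1 h2
    rw [h x] at this
    exact lt_irrefl _ this

/-- An isometric embedding f (not necessarily surjective) of the 1-Wasserstein
space over a countable discrete metric space X preserves disjointness of supports in both
directions. -/
theorem embedding_preserves_disjoint_supports {X : Type*} [Countable X]
    (f : (X → ℝ≥0∞) → (X → ℝ≥0∞))
    (hmap : ∀ μ : X → ℝ≥0∞, (∑' x, μ x = 1) → ∑' x, f μ x = 1)
    (hiso : ∀ μ ν : X → ℝ≥0∞, (∑' x, μ x = 1) → (∑' x, ν x = 1) →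
      1 - ∑' x, min (f μ x) (f ν x) = 1 - ∑' x, min (μ x) (ν x)) :
    ∀ μ ν : X → ℝ≥0∞, (∑' x, μ x = 1) → (∑' x, ν x = 1) →
      ({x | 0 < μ x} ∩ {x | 0 < ν x} = ∅ ↔ {x | 0 < f μ x} ∩ {x | 0 < f ν x} = ∅) := by
  intro μ ν hμ hν
  have key : ∑' x, min (f μ x) (f ν x) = ∑' x, min (μ x) (ν x) := by
    have h := hiso μ ν hμ hν
    exact (ENNReal.sub_right_inj ENNReal.one_ne_top
      (min_tsum_le _ _ (hmap μ hμ)) (min_tsum_le _ _ hμ)).mp h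
  rw [disjoint_iff_min_zero, disjoint_iff_min_zero, key]
end

section
/- Let f be an isometric embedding of the 1-Wasserstein space over a countable discrete metric space X. Then for every probability measure μ and every x ∈ X, f(μ)(S_{f(δ_x)}) = μ({x}), where S_ν denotes the support of ν. Consequently S_{f(μ)} ⊆ ⋃_{x ∈ S_μ} S_{f(δ_x)}. -/
open scoped ENNReal

private lemma tsum_eq_of_le' {ι : Type*} {a b : ι → ℝ≥0∞} (hle : ∀ i, a i ≤ b i)
    (hsum : ∑' i, b i ≤ ∑' i, a i) (hfin : ∑' i, a i ≠ ⊤) (i : ι) : b i = a i := by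
  classical
  refine le_antisymm ?_ (hle i)
  have ha := ENNReal.tsum_eq_add_tsum_ite (f := a) i
  have hb := ENNReal.tsum_eq_add_tsum_ite (f := b) i
  have hrest : (∑' x, if x = i then 0 else a x) ≤ (∑' x, if x = i then 0 else b x) := by
    refine ENNReal.tsum_le_tsum fun x => ?_
    by_cases hx : x = i <;> simp [hx, hle x]
  have key : b i + (∑' x, if x = i then 0 else a x) ≤ a i + (∑' x, if x = i then 0 else a x) := by
    calc b i + (∑' x, if x = i then 0 else a x)
        ≤ b i + (∑' x, if x = i then 0 else b x) := by gcongr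
      _ = ∑' x, b x := hb.symm
      _ ≤ ∑' x, a x := hsum
      _ = a i + (∑' x, if x = i then 0 else a x) := ha
  have hfin' : (∑' x, if x = i then 0 else a x) ≠ ⊤ := by
    refine ne_top_of_le_ne_top hfin ?_
    refine ENNReal.tsum_le_tsum fun x => ?_
    by_cases hx : x = i <;> simp [hx]
  exact ENNReal.le_of_add_le_add_right hfin' key

/-- For an isometric embedding f of the 1-Wasserstein space over a countable
discrete metric space X, the f-image of any μ puts mass μ({x}) on the support of f(δ_x);
consequently the support of f(μ) is contained in ⋃_{x ∈ S_μ} S_{f(δ_x)}. -/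
theorem image_mass_on_dirac_supports {X : Type*} [Countable X] [DecidableEq X]
    (f : (X → ℝ≥0∞) → (X → ℝ≥0∞))
    (hmap : ∀ μ : X → ℝ≥0∞, (∑' x, μ x = 1) → ∑' x, f μ x = 1)
    (hiso : ∀ μ ν : X → ℝ≥0∞, (∑' x, μ x = 1) → (∑' x, ν x = 1) →
      1 - ∑' x, min (f μ x) (f ν x) = 1 - ∑' x, min (μ x) (ν x)) :
    ∀ μ : X → ℝ≥0∞, (∑' x, μ x = 1) →
      (∀ x : X, ∑' y : X,
          Set.indicator {z | 0 < f (fun w => if w = x then 1 else 0) z} (f μ) y = μ x) ∧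
      {y | 0 < f μ y} ⊆ ⋃ x ∈ {x | 0 < μ x}, {y | 0 < f (fun w => if w = x then 1 else 0) y} := by
  intro μ hμ
  set D : X → X → ℝ≥0∞ := fun x w => if w = x then 1 else 0 with hD
  have hδsum : ∀ x, ∑' w, D x w = 1 := fun x => tsum_ite_eq x 1
  -- f preserves the sum of minima
  have hmin : ∀ (ρ ν : X → ℝ≥0∞), (∑' x, ρ x = 1) → (∑' x, ν x = 1) →
      ∑' x, min (f ρ x) (f ν x) = ∑' x, min (ρ x) (ν x) := by
    intro ρ ν hρ hν
    have h1 : ∑' x, min (f ρ x) (f ν x) ≤ 1 := by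
      rw [← hmap ρ hρ]; exact ENNReal.tsum_le_tsum fun x => min_le_left _ _
    have h2 : ∑' x, min (ρ x) (ν x) ≤ 1 := by
      rw [← hρ]; exact ENNReal.tsum_le_tsum fun x => min_le_left _ _
    have := hiso ρ ν hρ hν
    calc ∑' x, min (f ρ x) (f ν x)
        = 1 - (1 - ∑' x, min (f ρ x) (f ν x)) :=
          (ENNReal.sub_sub_cancel ENNReal.one_ne_top h1).symm
      _ = 1 - (1 - ∑' x, min (ρ x) (ν x)) := by rw [this]
      _ = ∑' x, min (ρ x) (ν x) := ENNReal.sub_sub_cancel ENNReal.one_ne_top h2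
  have hμle1 : ∀ x, μ x ≤ 1 := fun x => hμ ▸ ENNReal.le_tsum x
  have hmindelta : ∀ x, ∑' y, min (μ y) (D x y) = μ x := by
    intro x
    rw [tsum_eq_single x]
    · simp [hD, min_eq_left (hμle1 x)]
    · intro y hy; simp [hD, hy]
  have hA : ∀ x, ∑' y, min (f μ y) (f (D x) y) = μ x := by
    intro x; rw [hmin μ (D x) hμ (hδsum x), hmindelta]
  -- disjointness of supports of f(δ_x)
  have hdisj : ∀ x x', x ≠ x' → ∀ y, min (f (D x) y) (f (D x') y) = 0 := by
    intro x x' hne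
    have hz : ∑' y, min (D x y) (D x' y) = 0 := by
      rw [ENNReal.tsum_eq_zero]
      intro y
      simp only [hD]
      split_ifs <;> simp_all
    have := hmin (D x) (D x') (hδsum x) (hδsum x')
    rw [hz] at this
    exact fun y => ENNReal.tsum_eq_zero.mp this y
  -- pointwise bound : min ≤ indicator
  have hgmin : ∀ x y, min (f μ y) (f (D x) y) ≤
      Set.indicator {z | 0 < f (D x) z} (f μ) y := by
    intro x y
    by_cases hy : 0 < f (D x) y
    · rw [Set.indicator_of_mem (show y ∈ {z | 0 < f (D x) z} from hy)]
      exact min_le_left _ _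
    · have h0 : f (D x) y = 0 := by simpa using hy
      simp [h0]
  have hμleT : ∀ x, μ x ≤ ∑' y, Set.indicator {z | 0 < f (D x) z} (f μ) y := by
    intro x
    rw [← hA x]
    exact ENNReal.tsum_le_tsum (hgmin x)
  -- column bound : for each y, summing indicators over x is ≤ f μ y
  have hcol : ∀ y, (∑' x, Set.indicator {z | 0 < f (D x) z} (f μ) y) ≤ f μ y := by
    intro y
    by_cases hex : ∃ x0, 0 < f (D x0) y
    · obtain ⟨x0, hx0⟩ := hex
      rw [tsum_eq_single x0]
      · exact Set.indicator_le_self _ _ y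
      · intro x hx
        refine Set.indicator_of_notMem ?_ _
        intro hyx
        have := hdisj x x0 hx y
        rw [min_eq_iff] at this
        rcases this with ⟨h, _⟩ | ⟨h, _⟩
        · exact absurd h (by simpa using hyx.ne')
        · exact absurd h (by simpa using hx0.ne')
    · push_neg at hex
      have : ∀ x, Set.indicator {z | 0 < f (D x) z} (f μ) y = 0 := by
        intro x
        refine Set.indicator_of_notMem ?_ _
        simpa using hex x
      simp [this]
  have hsumT : (∑' x, ∑' y, Set.indicator {z | 0 < f (D x) z} (f μ) y) ≤ 1 := by
    rw [ENNReal.tsum_comm, ← hmap μ hμ]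
    exact ENNReal.tsum_le_tsum hcol
  have hTeq : ∀ x, (∑' y, Set.indicator {z | 0 < f (D x) z} (f μ) y) = μ x := by
    refine tsum_eq_of_le' hμleT ?_ ?_
    · calc (∑' x, ∑' y, Set.indicator {z | 0 < f (D x) z} (f μ) y)
          ≤ 1 := hsumT
        _ = ∑' x, μ x := hμ.symm
    · rw [hμ]; exact ENNReal.one_ne_top
  refine ⟨hTeq, ?_⟩
  -- second conjunct
  have hcoleq : ∀ y, f μ y = ∑' x, Set.indicator {z | 0 < f (D x) z} (f μ) y := by
    refine tsum_eq_of_le' hcol ?_ ?_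
    · refine le_of_eq ?_
      calc (∑' y, f μ y) = 1 := hmap μ hμ
        _ = ∑' x, μ x := hμ.symm
        _ = ∑' x, ∑' y, Set.indicator {z | 0 < f (D x) z} (f μ) y :=
            tsum_congr fun x => (hTeq x).symm
        _ = ∑' y, ∑' x, Set.indicator {z | 0 < f (D x) z} (f μ) y := ENNReal.tsum_comm
    · have : (∑' y, ∑' x, Set.indicator {z | 0 < f (D x) z} (f μ) y) = 1 := by
        rw [← ENNReal.tsum_comm]
        calc (∑' x, ∑' y, Set.indicator {z | 0 < f (D x) z} (f μ) y)
            = ∑' x, μ x := tsum_congr hTeq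
          _ = 1 := hμ
      rw [this]; exact ENNReal.one_ne_top
  intro y hy
  have hy' : 0 < ∑' x, Set.indicator {z | 0 < f (D x) z} (f μ) y := by
    rw [← hcoleq y]; exact hy
  have hex : ∃ x, Set.indicator {z | 0 < f (D x) z} (f μ) y ≠ 0 := by
    by_contra h
    push_neg at h
    rw [ENNReal.tsum_eq_zero.mpr h] at hy'
    exact lt_irrefl 0 hy'
  obtain ⟨x, hx⟩ := hex
  have hyS : y ∈ {z | 0 < f (D x) z} := by
    by_contra hyn
    exact hx (Set.indicator_of_notMem hyn _)
  have hμx : 0 < μ x := by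
    rw [← hTeq x]
    have := ENNReal.le_tsum (f := fun y => Set.indicator {z | 0 < f (D x) z} (f μ) y) y
    exact lt_of_lt_of_le (pos_iff_ne_zero.mpr hx) this
  exact Set.mem_biUnion hμx hyS
end

section
/- Let f be an isometric embedding of the 1-Wasserstein space over a countable discrete metric space X. If μ, ν are probability measures with 0 < μ({x}) ≤ ν({x}) for some x ∈ X, then the restriction of f(μ) to S_{f(δ_x)} is dominated pointwise by the restriction of f(ν) to S_{f(δ_x)}. -/
/-!
The images `f δ_w` of the Dirac masses have pairwise disjoint supports `S_w`, since `f` preserves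
the overlap `∑ z, min (ρ z) (σ z)` and distinct Dirac masses do not overlap. Overlapping with
`f δ_w` shows that `f ρ` puts mass at least `ρ w` on `S_w`; as the total mass is `1 = ∑ w, ρ w`,
it puts exactly `ρ w` there and nothing outside `⋃ w, S_w`. The same squeeze applied to
`min (f μ) (f ν)`, whose total mass is the overlap of `μ` and `ν`, gives mass `min (μ w) (ν w)`
on every `S_w`. For `w = x` this is `μ x`, the mass of `f μ` on `S_x`, so `min (f μ) (f ν) = f μ`
on `S_x`.
-/

open scoped ENNReal
open Function Set

section Squeeze

variable {ι X : Type*}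

theorem ENNReal.eq_of_forall_le_of_tsum_le {a b : ι → ℝ≥0∞} (hab : ∀ i, a i ≤ b i)
    (hsum : ∑' i, b i ≤ ∑' i, a i) (ha : ∑' i, a i ≠ ∞) (i : ι) : a i = b i :=
  (hab i).eq_of_not_lt fun hlt => (ENNReal.tsum_lt_tsum ha hab hlt).not_ge hsum

theorem tsum_indicator_apply_eq_indicator_iUnion {S : ι → Set X} (hS : Pairwise (Disjoint on S))
    (φ : X → ℝ≥0∞) (z : X) : ∑' w, (S w).indicator φ z = (⋃ w, S w).indicator φ z := by
  by_cases hz : z ∈ ⋃ w, S w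
  · obtain ⟨w₀, hw₀⟩ := mem_iUnion.mp hz
    rw [indicator_of_mem hz, tsum_eq_single w₀ fun w hw =>
      indicator_of_notMem ((hS hw).notMem_of_mem_right hw₀) φ, indicator_of_mem hw₀]
  · simp only [mem_iUnion, not_exists] at hz
    simp [hz]

theorem tsum_tsum_indicator_eq_tsum_indicator_iUnion {S : ι → Set X}
    (hS : Pairwise (Disjoint on S)) (φ : X → ℝ≥0∞) :
    ∑' w, ∑' z, (S w).indicator φ z = ∑' z, (⋃ w, S w).indicator φ z := by
  rw [ENNReal.tsum_comm]
  exact tsum_congr (tsum_indicator_apply_eq_indicator_iUnion hS φ)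

theorem tsum_indicator_eq_and_indicator_iUnion_eq {S : ι → Set X}
    (hS : Pairwise (Disjoint on S)) {h : X → ℝ≥0∞} {ρ : ι → ℝ≥0∞}
    (hsum : ∑' z, h z ≤ ∑' w, ρ w) (hρ : ∑' w, ρ w ≠ ∞)
    (hle : ∀ w, ρ w ≤ ∑' z, (S w).indicator h z) :
    (∀ w, ∑' z, (S w).indicator h z = ρ w) ∧ (⋃ w, S w).indicator h = h := by
  have hunion := tsum_tsum_indicator_eq_tsum_indicator_iUnion hS h
  have hunion_le : ∑' z, (⋃ w, S w).indicator h z ≤ ∑' z, h z :=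
    ENNReal.tsum_le_tsum (indicator_le_self _ h)
  have hρ_le : ∑' w, ρ w ≤ ∑' z, (⋃ w, S w).indicator h z :=
    hunion ▸ ENNReal.tsum_le_tsum hle
  refine ⟨fun w => (ENNReal.eq_of_forall_le_of_tsum_le hle ?_ hρ w).symm,
    funext (ENNReal.eq_of_forall_le_of_tsum_le (indicator_le_self _ h) ?_ ?_)⟩
  · exact hunion ▸ hunion_le.trans hsum
  · exact hsum.trans hρ_le
  · exact ne_top_of_le_ne_top hρ (hunion_le.trans hsum)

end Squeeze

section Overlap

variable {X : Type*}

noncomputable def overlap (φ ψ : X → ℝ≥0∞) : ℝ≥0∞ := ∑' z, min (φ z) (ψ z)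

theorem overlap_le_tsum_left (φ ψ : X → ℝ≥0∞) : overlap φ ψ ≤ ∑' z, φ z :=
  ENNReal.tsum_le_tsum fun _ => min_le_left _ _

theorem overlap_le_tsum_indicator_support (φ ψ : X → ℝ≥0∞) :
    overlap φ ψ ≤ ∑' z, (support ψ).indicator φ z :=
  ENNReal.tsum_le_tsum fun z => by
    by_cases hz : z ∈ support ψ
    · rw [indicator_of_mem hz]
      exact min_le_left _ _
    · simp [notMem_support.mp hz]

theorem disjoint_support_of_overlap_eq_zero {φ ψ : X → ℝ≥0∞} (h : overlap φ ψ = 0) :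
    Disjoint (support φ) (support ψ) :=
  disjoint_left.mpr fun z hφ hψ => by
    have hz : min (φ z) (ψ z) = 0 := ENNReal.tsum_eq_zero.mp h z
    rcases min_choice (φ z) (ψ z) with hmin | hmin
    · exact hφ (hmin ▸ hz)
    · exact hψ (hmin ▸ hz)

theorem overlap_map_eq_of_isometry {f : (X → ℝ≥0∞) → (X → ℝ≥0∞)}
    (hmap : ∀ ρ : X → ℝ≥0∞, (∑' z, ρ z = 1) → ∑' z, f ρ z = 1)
    (hiso : ∀ ρ σ : X → ℝ≥0∞, (∑' z, ρ z = 1) → (∑' z, σ z = 1) →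
      1 - ∑' z, min (f ρ z) (f σ z) = 1 - ∑' z, min (ρ z) (σ z))
    {ρ σ : X → ℝ≥0∞} (hρ : ∑' z, ρ z = 1) (hσ : ∑' z, σ z = 1) :
    overlap (f ρ) (f σ) = overlap ρ σ :=
  (ENNReal.sub_right_inj ENNReal.one_ne_top ((overlap_le_tsum_left _ _).trans (hmap ρ hρ).le)
    ((overlap_le_tsum_left _ _).trans hρ.le)).mp (hiso ρ σ hρ hσ)

variable [DecidableEq X]

def dirac (x : X) : X → ℝ≥0∞ := fun w => if w = x then 1 else 0

theorem tsum_dirac (x : X) : ∑' z, dirac x z = 1 := tsum_ite_eq x 1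

theorem overlap_dirac_right {ρ : X → ℝ≥0∞} {x : X} (h : ρ x ≤ 1) :
    overlap ρ (dirac x) = ρ x := by
  rw [overlap, tsum_eq_single x fun z hz => by simp [dirac, hz]]
  simp [dirac, h]

theorem overlap_dirac_dirac {x y : X} (h : x ≠ y) : overlap (dirac x) (dirac y) = 0 := by
  have h0 : dirac x y = 0 := if_neg h.symm
  rw [overlap_dirac_right (h0 ▸ zero_le_one), h0]

end Overlap

section IsometricEmbedding

variable {X : Type*} [DecidableEq X] {f : (X → ℝ≥0∞) → (X → ℝ≥0∞)}
  (hmap : ∀ ρ : X → ℝ≥0∞, (∑' z, ρ z = 1) → ∑' z, f ρ z = 1)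
  (hover : ∀ ρ σ : X → ℝ≥0∞, (∑' z, ρ z = 1) → (∑' z, σ z = 1) →
    overlap (f ρ) (f σ) = overlap ρ σ)
include hover

theorem pairwise_disjoint_support_map_dirac :
    Pairwise (Disjoint on fun w => support (f (dirac w))) := fun _ _ hne =>
  disjoint_support_of_overlap_eq_zero <|
    (hover _ _ (tsum_dirac _) (tsum_dirac _)).trans (overlap_dirac_dirac hne)

theorem le_tsum_indicator_support_map_dirac {ρ : X → ℝ≥0∞} (hρ : ∑' z, ρ z = 1) (w : X) :
    ρ w ≤ ∑' z, (support (f (dirac w))).indicator (f ρ) z :=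
  calc ρ w = overlap ρ (dirac w) := (overlap_dirac_right (hρ ▸ ENNReal.le_tsum w)).symm
    _ = overlap (f ρ) (f (dirac w)) := (hover _ _ hρ (tsum_dirac w)).symm
    _ ≤ _ := overlap_le_tsum_indicator_support _ _

include hmap

theorem tsum_indicator_support_map_dirac {ρ : X → ℝ≥0∞} (hρ : ∑' z, ρ z = 1) :
    (∀ w, ∑' z, (support (f (dirac w))).indicator (f ρ) z = ρ w) ∧
      (⋃ w, support (f (dirac w))).indicator (f ρ) = f ρ :=
  tsum_indicator_eq_and_indicator_iUnion_eq (pairwise_disjoint_support_map_dirac hover)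
    ((hmap ρ hρ).trans hρ.symm).le (hρ ▸ ENNReal.one_ne_top)
    (le_tsum_indicator_support_map_dirac hover hρ)

theorem tsum_indicator_support_map_dirac_min {μ ν : X → ℝ≥0∞} (hμ : ∑' z, μ z = 1)
    (hν : ∑' z, ν z = 1) (w : X) :
    ∑' z, (support (f (dirac w))).indicator (fun z => min (f μ z) (f ν z)) z =
      min (μ w) (ν w) := by
  set S := fun w => support (f (dirac w))
  set m : X → ℝ≥0∞ := fun z => min (f μ z) (f ν z)
  obtain ⟨hmassμ, hcarrierμ⟩ := tsum_indicator_support_map_dirac hmap hover hμ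
  have hmassν := (tsum_indicator_support_map_dirac hmap hover hν).1
  have hcarrier : (⋃ w, S w).indicator m = m := by
    rw [indicator_eq_self] at hcarrierμ ⊢
    exact fun z hz => hcarrierμ fun hfz => hz (by simp [m, hfz])
  have hle : ∀ w, ∑' z, (S w).indicator m z ≤ min (μ w) (ν w) := fun w =>
    le_min (hmassμ w ▸ ENNReal.tsum_le_tsum fun _ => indicator_le_indicator (min_le_left _ _))
      (hmassν w ▸ ENNReal.tsum_le_tsum fun _ => indicator_le_indicator (min_le_right _ _))
  refine ENNReal.eq_of_forall_le_of_tsum_le hle (le_of_eq ?_) ?_ w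
  · calc ∑' w, min (μ w) (ν w) = overlap (f μ) (f ν) := (hover μ ν hμ hν).symm
      _ = ∑' w, ∑' z, (S w).indicator m z := by
        rw [tsum_tsum_indicator_eq_tsum_indicator_iUnion
          (pairwise_disjoint_support_map_dirac hover), hcarrier]
        rfl
  · exact ne_top_of_le_ne_top ENNReal.one_ne_top
      ((ENNReal.tsum_le_tsum hle).trans (hμ ▸ overlap_le_tsum_left μ ν))

end IsometricEmbedding

theorem restriction_monotone_general {X : Type*} [DecidableEq X]
    (f : (X → ℝ≥0∞) → (X → ℝ≥0∞))
    (hmap : ∀ μ : X → ℝ≥0∞, (∑' x, μ x = 1) → ∑' x, f μ x = 1)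
    (hiso : ∀ μ ν : X → ℝ≥0∞, (∑' x, μ x = 1) → (∑' x, ν x = 1) →
      1 - ∑' x, min (f μ x) (f ν x) = 1 - ∑' x, min (μ x) (ν x))
    (μ ν : X → ℝ≥0∞) (hμ : ∑' x, μ x = 1) (hν : ∑' x, ν x = 1)
    (x : X) (hxy : μ x ≤ ν x) :
    ∀ y : X,
      Set.indicator {z | 0 < f (fun w => if w = x then 1 else 0) z} (f μ) y ≤
      Set.indicator {z | 0 < f (fun w => if w = x then 1 else 0) z} (f ν) y := by
  have hover := fun ρ σ => overlap_map_eq_of_isometry (ρ := ρ) (σ := σ) hmap hiso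
  set S := support (f (dirac x))
  set m : X → ℝ≥0∞ := fun z => min (f μ z) (f ν z)
  have hm_le : ∀ z, S.indicator m z ≤ S.indicator (f μ) z := fun _ =>
    indicator_le_indicator (min_le_left _ _)
  have hmass : ∑' z, S.indicator m z = ∑' z, S.indicator (f μ) z := by
    rw [tsum_indicator_support_map_dirac_min hmap hover hμ hν x, min_eq_left hxy,
      (tsum_indicator_support_map_dirac hmap hover hμ).1 x]
  have hfin : ∑' z, S.indicator m z ≠ ∞ := ne_top_of_le_ne_top ENNReal.one_ne_top
    (hmap μ hμ ▸ ENNReal.tsum_le_tsum fun _ => (hm_le _).trans (indicator_le_self _ _ _))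
  have hS : {z | 0 < f (dirac x) z} = S := by
    ext; simp [S, pos_iff_ne_zero]
  intro y
  change {z | 0 < f (dirac x) z}.indicator (f μ) y ≤ {z | 0 < f (dirac x) z}.indicator (f ν) y
  rw [hS, ← ENNReal.eq_of_forall_le_of_tsum_le hm_le hmass.ge hfin y]
  exact indicator_le_indicator (min_le_right _ _)

/-- For an isometric embedding f of the 1-Wasserstein space over a countable
discrete metric space X, if 0 < μ({x}) ≤ ν({x}), then the restriction of f(μ) to the support
of f(δ_x) is dominated pointwise by the restriction of f(ν) to the same set. -/
theorem restriction_monotone {X : Type*} [Countable X] [DecidableEq X]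
    (f : (X → ℝ≥0∞) → (X → ℝ≥0∞))
    (hmap : ∀ μ : X → ℝ≥0∞, (∑' x, μ x = 1) → ∑' x, f μ x = 1)
    (hiso : ∀ μ ν : X → ℝ≥0∞, (∑' x, μ x = 1) → (∑' x, ν x = 1) →
      1 - ∑' x, min (f μ x) (f ν x) = 1 - ∑' x, min (μ x) (ν x))
    (μ ν : X → ℝ≥0∞) (hμ : ∑' x, μ x = 1) (hν : ∑' x, ν x = 1)
    (x : X) (hx : 0 < μ x) (hxy : μ x ≤ ν x) :
    ∀ y : X,
      Set.indicator {z | 0 < f (fun w => if w = x then 1 else 0) z} (f μ) y ≤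
      Set.indicator {z | 0 < f (fun w => if w = x then 1 else 0) z} (f ν) y :=
  restriction_monotone_general f hmap hiso μ ν hμ hν x hxy
end

section
/- Let Φ = (φ_{x,t}) satisfy conditions (a) φ_{x,1} and φ_{y,1} have disjoint supports for x≠y, (b) φ_{x,t}(X) = t, (c) φ_{x,s} ≤ φ_{x,t} for s < t. Then for probability measures μ, ν on X, (Σ_{x∈S_μ} φ_{x,μ({x})}) ∧ (Σ_{x∈S_ν} φ_{x,ν({x})}) has total mass equal to Σ_{x ∈ S_μ ∩ S_ν} min(μ({x}), ν({x})) = (μ∧ν)(X). -/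
open scoped ENNReal

/-!
Each `φ x (μ x)` and `φ x (ν x)` lies below `φ x 1`, and the `φ x 1` have pairwise disjoint
supports, so at every point `z` at most one base point contributes to either sum: the minimum of
the two sums is the sum over `x` of the pointwise minima. After exchanging the sums, the minimum
at a fixed `x` is the smaller of the two nested measures `φ x (μ x)`, `φ x (ν x)`, whose mass is
`min (μ x) (ν x)`.
-/

open Function Set

theorem ENNReal.min_tsum_eq_tsum_min_of_le {ι : Type*} {a b c : ι → ℝ≥0∞}
    (hc : (support c).Subsingleton) (ha : a ≤ c) (hb : b ≤ c) :
    min (∑' i, a i) (∑' i, b i) = ∑' i, min (a i) (b i) := by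
  have eq_zero {f : ι → ℝ≥0∞} (hf : f ≤ c) {i : ι} (hi : c i = 0) : f i = 0 :=
    nonpos_iff_eq_zero.1 (hi ▸ hf i)
  by_cases h : ∃ i₀, c i₀ ≠ 0
  · obtain ⟨i₀, hi₀⟩ := h
    have hne {i : ι} (hi : i ≠ i₀) : c i = 0 := by
      by_contra h
      exact hi (hc h hi₀)
    rw [tsum_eq_single i₀ fun i hi => eq_zero ha (hne hi),
      tsum_eq_single i₀ fun i hi => eq_zero hb (hne hi),
      tsum_eq_single i₀ fun i hi => by rw [eq_zero ha (hne hi), eq_zero hb (hne hi), min_self]]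
  · push Not at h
    simp [eq_zero ha (h _), eq_zero hb (h _)]

theorem support_apply_subsingleton_of_disjoint {ι X M : Type*} [AddMonoid M] [PartialOrder M]
    [CanonicallyOrderedAdd M] {F : ι → X → M}
    (hF : ∀ i j, i ≠ j → {z | 0 < F i z} ∩ {z | 0 < F j z} = ∅) (z : X) :
    (support fun i => F i z).Subsingleton := by
  intro i hi j hj
  by_contra hij
  have hz : z ∈ {z | 0 < F i z} ∩ {z | 0 < F j z} :=
    ⟨pos_iff_ne_zero.2 hi, pos_iff_ne_zero.2 hj⟩
  simp [hF i j hij] at hz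

section Gated

variable {X : Type*} {ψ : ℝ≥0∞ → X → ℝ≥0∞}

theorem ite_pos_apply_le_apply_one (hψ : MonotoneOn ψ (Ioc 0 1)) {t : ℝ≥0∞} (ht : t ≤ 1)
    (z : X) :
    (if 0 < t then ψ t z else 0) ≤ ψ 1 z := by
  split_ifs with h
  · exact hψ ⟨h, ht⟩ ⟨one_pos, le_rfl⟩ ht z
  · exact zero_le

theorem tsum_min_ite_pos_eq_min (hψ : MonotoneOn ψ (Ioc 0 1))
    (hmass : ∀ t, 0 < t → t ≤ 1 → ∑' z, ψ t z = t) {s t : ℝ≥0∞} (hs : s ≤ 1) (ht : t ≤ 1) :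
    ∑' z, min (if 0 < s then ψ s z else 0) (if 0 < t then ψ t z else 0) = min s t := by
  wlog hst : s ≤ t generalizing s t
  · simpa only [min_comm] using this ht hs (le_of_not_ge hst)
  rcases eq_zero_or_pos s with rfl | hs₀
  · simp
  have ht₀ := hs₀.trans_le hst
  simp only [if_pos hs₀, if_pos ht₀, min_eq_left hst]
  simp only [min_eq_left (hψ ⟨hs₀, hs⟩ ⟨ht₀, ht⟩ hst _)]
  exact hmass s hs₀ hs

end Gated

theorem family_min_mass_general {X : Type*}
    (φ : X → ℝ≥0∞ → (X → ℝ≥0∞))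
    (ha : ∀ x y : X, x ≠ y → {z | 0 < φ x 1 z} ∩ {z | 0 < φ y 1 z} = ∅)
    (hb : ∀ (x : X) (t : ℝ≥0∞), 0 < t → t ≤ 1 → ∑' z, φ x t z = t)
    (hc : ∀ (x : X) (s t : ℝ≥0∞), 0 < s → s < t → t ≤ 1 → ∀ z, φ x s z ≤ φ x t z)
    (μ ν : X → ℝ≥0∞) (hμ : ∑' x, μ x = 1) (hν : ∑' x, ν x = 1) :
    ∑' z, min (∑' x : X, if 0 < μ x then φ x (μ x) z else 0)
              (∑' x : X, if 0 < ν x then φ x (ν x) z else 0)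
      = ∑' x, min (μ x) (ν x) := by
  have hμ₁ (x : X) : μ x ≤ 1 := hμ ▸ ENNReal.le_tsum x
  have hν₁ (x : X) : ν x ≤ 1 := hν ▸ ENNReal.le_tsum x
  have hmono (x : X) : MonotoneOn (φ x) (Ioc 0 1) :=
    monotoneOn_iff_forall_lt.2 fun s hs t ht hst => hc x s t hs.1 hst ht.2
  calc _ = ∑' z, ∑' x, min (if 0 < μ x then φ x (μ x) z else 0)
              (if 0 < ν x then φ x (ν x) z else 0) :=
        tsum_congr fun z => ENNReal.min_tsum_eq_tsum_min_of_le
          (support_apply_subsingleton_of_disjoint ha z)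
          (fun x => ite_pos_apply_le_apply_one (hmono x) (hμ₁ x) z)
          (fun x => ite_pos_apply_le_apply_one (hmono x) (hν₁ x) z)
    _ = ∑' x, ∑' z, min (if 0 < μ x then φ x (μ x) z else 0)
              (if 0 < ν x then φ x (ν x) z else 0) := ENNReal.tsum_comm
    _ = _ := tsum_congr fun x => tsum_min_ite_pos_eq_min (hmono x) (hb x) (hμ₁ x) (hν₁ x)

/-- Under conditions (a)-(c) on the family Φ = (φ_{x,t}), the pointwise minimum
of Σ_{x∈S_μ} φ_{x,μ({x})} and Σ_{x∈S_ν} φ_{x,ν({x})} has total mass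
Σ_{x ∈ S_μ ∩ S_ν} min(μ({x}), ν({x})) = (μ∧ν)(X). -/
theorem family_min_mass {X : Type*} [Countable X]
    (φ : X → ℝ≥0∞ → (X → ℝ≥0∞))
    (ha : ∀ x y : X, x ≠ y → {z | 0 < φ x 1 z} ∩ {z | 0 < φ y 1 z} = ∅)
    (hb : ∀ (x : X) (t : ℝ≥0∞), 0 < t → t ≤ 1 → ∑' z, φ x t z = t)
    (hc : ∀ (x : X) (s t : ℝ≥0∞), 0 < s → s < t → t ≤ 1 → ∀ z, φ x s z ≤ φ x t z)
    (μ ν : X → ℝ≥0∞) (hμ : ∑' x, μ x = 1) (hν : ∑' x, ν x = 1) :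
    ∑' z, min (∑' x : X, if 0 < μ x then φ x (μ x) z else 0)
              (∑' x : X, if 0 < ν x then φ x (ν x) z else 0)
      = ∑' x, min (μ x) (ν x) :=
  family_min_mass_general φ ha hb hc μ ν hμ hν
end

section
/- Let X = ℕ with the discrete metric, and define f on probability measures by f(Σ cₙ δₙ) = Σₙ [ln(1+cₙ)·δ_{2n} + (cₙ − ln(1+cₙ))·δ_{2n+1}]. Then f is a non-surjective isometric embedding of the 1-Wasserstein space over X whose range contains no Dirac measure. -/
open scoped ENNReal

noncomputable def L (c : ℝ≥0∞) : ℝ≥0∞ := ENNReal.ofReal (Real.log (1 + c.toReal))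

lemma real_log_le (x : ℝ) (hx : 0 ≤ x) : Real.log (1 + x) ≤ x := by
  have := Real.log_le_sub_one_of_pos (x := 1 + x) (by linarith)
  linarith

lemma L_le (c : ℝ≥0∞) : L c ≤ c := by
  refine le_trans (ENNReal.ofReal_le_ofReal (real_log_le _ ENNReal.toReal_nonneg)) ?_
  exact ENNReal.ofReal_toReal_le

lemma L_add (c : ℝ≥0∞) : L c + (c - L c) = c := add_tsub_cancel_of_le (L_le c)

lemma L_mono {a b : ℝ≥0∞} (hb : b ≠ ∞) (h : a ≤ b) : L a ≤ L b := by
  refine ENNReal.ofReal_le_ofReal (Real.log_le_log (by positivity) ?_)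
  have := ENNReal.toReal_mono hb h
  linarith

lemma R_eq {a : ℝ≥0∞} (ha : a ≠ ∞) :
    a - L a = ENNReal.ofReal (a.toReal - Real.log (1 + a.toReal)) := by
  rw [ENNReal.ofReal_sub _ (Real.log_nonneg (by simp [ENNReal.toReal_nonneg]))]
  rw [ENNReal.ofReal_toReal ha]; rfl

lemma real_R_mono {s t : ℝ} (hs : 0 ≤ s) (h : s ≤ t) :
    s - Real.log (1 + s) ≤ t - Real.log (1 + t) := by
  have h1 : (0:ℝ) < 1 + s := by linarith
  have h2 : (0:ℝ) < 1 + t := by linarith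
  have key : Real.log (1 + t) - Real.log (1 + s) ≤ t - s := by
    rw [← Real.log_div (by positivity) (by positivity)]
    have := Real.log_le_sub_one_of_pos (x := (1 + t) / (1 + s)) (by positivity)
    have h3 : (1 + t) / (1 + s) - 1 ≤ t - s := by
      rw [div_sub_one (by positivity), div_le_iff₀ h1]; nlinarith
    linarith
  linarith

lemma R_mono {a b : ℝ≥0∞} (hb : b ≠ ∞) (h : a ≤ b) : a - L a ≤ b - L b := by
  have ha : a ≠ ∞ := fun hh => by simp [hh, top_le_iff.mp (hh ▸ h)] at hb
  rw [R_eq ha, R_eq hb]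
  exact ENNReal.ofReal_le_ofReal
    (real_R_mono ENNReal.toReal_nonneg (ENNReal.toReal_mono hb h))

lemma L_min {a b : ℝ≥0∞} (ha : a ≠ ∞) (hb : b ≠ ∞) :
    min (L a) (L b) = L (min a b) := by
  rcases le_total a b with h | h
  · rw [min_eq_left h, min_eq_left (L_mono hb h)]
  · rw [min_eq_right h, min_eq_right (L_mono ha h)]

lemma R_min {a b : ℝ≥0∞} (ha : a ≠ ∞) (hb : b ≠ ∞) :
    min (a - L a) (b - L b) = min a b - L (min a b) := by
  rcases le_total a b with h | h
  · rw [min_eq_left h, min_eq_left (R_mono hb h)]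
  · rw [min_eq_right h, min_eq_right (R_mono ha h)]

lemma split_sum (g : ℕ → ℝ≥0∞) :
    ∑' k, g k = ∑' n, (g (2 * n) + g (2 * n + 1)) := by
  rw [ENNReal.tsum_add, tsum_even_add_odd ENNReal.summable ENNReal.summable]

/-- On X = ℕ with the discrete metric, the map
f(Σ cₙ δₙ) = Σₙ [ln(1+cₙ)·δ_{2n} + (cₙ − ln(1+cₙ))·δ_{2n+1}]
is a non-surjective isometric embedding of the 1-Wasserstein space whose range contains no
Dirac measure. -/
theorem log_splitting_embedding
    (f : (ℕ → ℝ≥0∞) → (ℕ → ℝ≥0∞))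
    (hf : f = fun μ => fun k =>
      if k % 2 = 0 then ENNReal.ofReal (Real.log (1 + (μ (k / 2)).toReal))
      else μ (k / 2) - ENNReal.ofReal (Real.log (1 + (μ (k / 2)).toReal))) :
    (∀ μ : ℕ → ℝ≥0∞, (∑' n, μ n = 1) → ∑' k, f μ k = 1) ∧
    (∀ μ ν : ℕ → ℝ≥0∞, (∑' n, μ n = 1) → (∑' n, ν n = 1) →
      1 - ∑' k, min (f μ k) (f ν k) = 1 - ∑' k, min (μ k) (ν k)) ∧
    ¬ Set.SurjOn f {μ | ∑' n, μ n = 1} {μ | ∑' n, μ n = 1} ∧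
    (∀ μ : ℕ → ℝ≥0∞, (∑' n, μ n = 1) →
      ∀ n : ℕ, f μ ≠ fun k => if k = n then 1 else 0) := by
  have hfe : ∀ μ n, f μ (2 * n) = L (μ n) := by
    intro μ n; simp [hf, Nat.mul_mod_right, Nat.mul_div_cancel_left _ (by norm_num : 0 < 2), L]
  have hfo : ∀ μ n, f μ (2 * n + 1) = μ n - L (μ n) := by
    intro μ n
    simp [hf, Nat.mul_add_mod, L, Nat.mul_add_div (by norm_num : 0 < 2)]
  have hle : ∀ (μ : ℕ → ℝ≥0∞), (∑' n, μ n = 1) → ∀ n, μ n ≠ ∞ := by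
    intro μ hμ n
    exact fun h => by simpa [h, hμ] using ENNReal.le_tsum (f := μ) n
  have hsum : ∀ μ : ℕ → ℝ≥0∞, (∑' n, μ n = 1) → ∑' k, f μ k = 1 := by
    intro μ hμ
    rw [split_sum]
    calc ∑' n, (f μ (2*n) + f μ (2*n+1)) = ∑' n, μ n := by
          refine tsum_congr fun n => ?_; rw [hfe, hfo, L_add]
      _ = 1 := hμ
  have hdirac : ∀ μ : ℕ → ℝ≥0∞, (∑' n, μ n = 1) →
      ∀ n : ℕ, f μ ≠ fun k => if k = n then 1 else 0 := by
    intro μ hμ n heq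
    have hμle : ∀ m, μ m ≤ 1 := fun m => hμ ▸ ENNReal.le_tsum m
    rcases Nat.even_or_odd n with ⟨m, hm⟩ | ⟨m, hm⟩
    · have h1 : f μ (2 * m) = 1 := by
        rw [heq]; simp [hm, two_mul]
      rw [hfe] at h1
      have : L (μ m) ≤ ENNReal.ofReal (Real.log 2) := by
        unfold L
        refine ENNReal.ofReal_le_ofReal (Real.log_le_log (by positivity) ?_)
        have := (ENNReal.toReal_le_toReal (hle μ hμ m) (by norm_num)).mpr (hμle m)
        simp at this; linarith
      rw [h1] at this
      have h2 : ENNReal.ofReal (Real.log 2) < 1 := by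
        rw [← ENNReal.ofReal_one]
        exact ENNReal.ofReal_lt_ofReal_iff_of_nonneg (Real.log_nonneg (by norm_num)) |>.mpr
          (by have := Real.log_two_lt_d9; linarith)
      exact absurd this (not_le.mpr h2)
    · have h1 : f μ (2 * m + 1) = 1 := by rw [heq]; simp [hm]
      rw [hfo] at h1
      have hm1 : μ m = 1 := le_antisymm (hμle m) (h1 ▸ tsub_le_self)
      rw [hm1] at h1
      have hL : 0 < L 1 := by
        unfold L
        simp only [ENNReal.toReal_one]
        rw [ENNReal.ofReal_pos]
        exact Real.log_pos (by norm_num)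
      have : (1:ℝ≥0∞) - L 1 < 1 := ENNReal.sub_lt_self (by norm_num) (by norm_num) hL.ne'
      rw [h1] at this; exact lt_irrefl _ this
  refine ⟨hsum, ?_, ?_, hdirac⟩
  · intro μ ν hμ hν
    congr 1
    rw [split_sum fun k => min (f μ k) (f ν k)]
    refine tsum_congr fun n => ?_
    rw [hfe, hfe, hfo, hfo, L_min (hle μ hμ n) (hle ν hν n),
      R_min (hle μ hμ n) (hle ν hν n), L_add]
  · intro hsurj
    have h1 : (fun k => if k = 0 then (1:ℝ≥0∞) else 0) ∈ {μ : ℕ → ℝ≥0∞ | ∑' n, μ n = 1} := by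
      simp [Set.mem_setOf_eq, tsum_ite_eq]
    obtain ⟨μ, hμ, hfμ⟩ := hsurj h1
    exact hdirac μ hμ 0 hfμ
end

section
/- If the underlying countable discrete metric space X is finite, then every isometric embedding of the 1-Wasserstein space over X is automatically surjective, and hence is induced by a permutation of X (i.e., it is a pushforward by a bijection of X). -/
/-!
The Dirac masses are the probability vectors at distance 1 from each other, so an isometric
embedding sends them to probability vectors with pairwise disjoint supports. On a finite set
there are as many Dirac masses as points, so each image support is a single point: `f` maps
Dirac masses to Dirac masses through a permutation `σ`. Since `W₁(μ, δₓ) = 1 - μ x`, the mass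
of `f μ` at `σ x` equals the mass of `μ` at `x`, i.e. `f` is the pushforward by `σ`, in
particular surjective.
-/

open scoped ENNReal
open Function

theorem exists_perm_support_eq_singleton {X M : Type*} [Finite X] [Zero M] (g : X → X → M)
    (hne : ∀ x, g x ≠ 0) (hdisj : Pairwise fun x y => Disjoint (support (g x)) (support (g y))) :
    ∃ σ : Equiv.Perm X, ∀ x, support (g x) = {σ x} := by
  choose s hs using fun x => support_nonempty_iff.2 (hne x)
  have hinj : Injective s := fun x y hxy =>
    by_contra fun hxy' => Set.disjoint_left.1 (hdisj hxy') (hs x) (hxy ▸ hs y)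
  have hbij : Bijective s := Finite.injective_iff_bijective.1 hinj
  refine ⟨Equiv.ofBijective s hbij, fun x =>
    Set.Subset.antisymm (fun z hz => ?_) (Set.singleton_subset_iff.2 (hs x))⟩
  obtain ⟨y, rfl⟩ := hbij.2 z
  obtain rfl : y = x := by_contra fun hyx => Set.disjoint_left.1 (hdisj hyx) (hs y) hz
  rfl

namespace ENNReal

variable {X : Type*}

theorem tsum_min_le_one {μ : X → ℝ≥0∞} (hμ : ∑' z, μ z = 1) (ν : X → ℝ≥0∞) :
    ∑' z, min (μ z) (ν z) ≤ 1 :=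
  hμ ▸ ENNReal.tsum_le_tsum fun _ => min_le_left _ _

theorem tsum_min_pi_single_one [DecidableEq X] {μ : X → ℝ≥0∞} {a : X} (ha : μ a ≤ 1) :
    ∑' z, min (μ z) ((Pi.single a 1 : X → ℝ≥0∞) z) = μ a := by
  rw [tsum_eq_single a fun z hz => by simp [hz]]
  simp [ha]

theorem tsum_min_pi_single_pi_single [DecidableEq X] {x y : X} (hxy : x ≠ y) :
    ∑' z, min ((Pi.single x 1 : X → ℝ≥0∞) z) ((Pi.single y 1 : X → ℝ≥0∞) z) = 0 := by
  rw [tsum_min_pi_single_one (by simp [hxy.symm])]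
  simp [hxy.symm]

theorem disjoint_support_of_tsum_min_eq_zero {μ ν : X → ℝ≥0∞}
    (h : ∑' z, min (μ z) (ν z) = 0) : Disjoint (support μ) (support ν) :=
  Set.disjoint_left.2 fun z hμ hν => (min_eq_zero.1 (ENNReal.tsum_eq_zero.1 h z)).elim hμ hν

theorem eq_pi_single_of_support_eq [DecidableEq X] {μ : X → ℝ≥0∞} (hμ : ∑' z, μ z = 1) {a : X}
    (h : support μ = {a}) : μ = Pi.single a 1 := by
  have hzero : ∀ z, z ≠ a → μ z = 0 := fun z hz => notMem_support.1 (h ▸ hz)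
  have ha : μ a = 1 := by rwa [tsum_eq_single a hzero] at hμ
  funext z
  by_cases hz : z = a
  · simp [hz, ha]
  · simp [hz, hzero z hz]

end ENNReal

open ENNReal

section OverlapPreserving

variable {X : Type*} [DecidableEq X] {f : (X → ℝ≥0∞) → X → ℝ≥0∞}

theorem exists_perm_apply_pi_single [Finite X] (hmap : ∀ μ, ∑' x, μ x = 1 → ∑' x, f μ x = 1)
    (hf : ∀ μ ν, ∑' x, μ x = 1 → ∑' x, ν x = 1 →
      ∑' x, min (f μ x) (f ν x) = ∑' x, min (μ x) (ν x)) :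
    ∃ σ : Equiv.Perm X, ∀ x, f (Pi.single x 1) = Pi.single (σ x) 1 := by
  have hδ (x : X) : ∑' z, (Pi.single x 1 : X → ℝ≥0∞) z = 1 := tsum_pi_single x 1
  obtain ⟨σ, hσ⟩ := exists_perm_support_eq_singleton (fun x => f (Pi.single x 1))
    (fun x h => by simpa [h] using hmap _ (hδ x))
    (fun x y hxy => disjoint_support_of_tsum_min_eq_zero <| by
      rw [hf _ _ (hδ x) (hδ y), tsum_min_pi_single_pi_single hxy])
  exact ⟨σ, fun x => eq_pi_single_of_support_eq (hmap _ (hδ x)) (hσ x)⟩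

theorem apply_eq_comp_symm_of_apply_pi_single (hmap : ∀ μ, ∑' x, μ x = 1 → ∑' x, f μ x = 1)
    (hf : ∀ μ ν, ∑' x, μ x = 1 → ∑' x, ν x = 1 →
      ∑' x, min (f μ x) (f ν x) = ∑' x, min (μ x) (ν x))
    {σ : Equiv.Perm X} (hσ : ∀ x, f (Pi.single x 1) = Pi.single (σ x) 1) {μ : X → ℝ≥0∞}
    (hμ : ∑' x, μ x = 1) : f μ = μ ∘ σ.symm := by
  funext z
  obtain ⟨x, rfl⟩ := σ.surjective z
  calc f μ (σ x) = ∑' z, min (f μ z) ((Pi.single (σ x) 1 : X → ℝ≥0∞) z) :=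
        (tsum_min_pi_single_one (hmap μ hμ ▸ ENNReal.le_tsum _)).symm
    _ = ∑' z, min (μ z) ((Pi.single x 1 : X → ℝ≥0∞) z) := by
        rw [← hσ, hf _ _ hμ (tsum_pi_single x 1)]
    _ = (μ ∘ σ.symm) (σ x) := by
        rw [tsum_min_pi_single_one (hμ ▸ ENNReal.le_tsum _)]
        simp

end OverlapPreserving

theorem finite_embedding_is_surjective_general {X : Type*} [Fintype X] [DecidableEq X]
    (f : (X → ℝ≥0∞) → (X → ℝ≥0∞))
    (hmap : ∀ μ : X → ℝ≥0∞, (∑' x, μ x = 1) → ∑' x, f μ x = 1)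
    (hiso : ∀ μ ν : X → ℝ≥0∞, (∑' x, μ x = 1) → (∑' x, ν x = 1) →
      1 - ∑' x, min (f μ x) (f ν x) = 1 - ∑' x, min (μ x) (ν x)) :
    Set.SurjOn f {μ | ∑' x, μ x = 1} {μ | ∑' x, μ x = 1} ∧
    ∃ σ : Equiv.Perm X, ∀ μ : X → ℝ≥0∞, (∑' x, μ x = 1) →
      ∀ x : X, f μ x = μ (σ.symm x) := by
  have hf : ∀ μ ν : X → ℝ≥0∞, (∑' x, μ x = 1) → (∑' x, ν x = 1) →
      ∑' x, min (f μ x) (f ν x) = ∑' x, min (μ x) (ν x) := fun μ ν hμ hν =>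
    (ENNReal.sub_right_inj one_ne_top (tsum_min_le_one (hmap μ hμ) _)
      (tsum_min_le_one hμ _)).1 (hiso μ ν hμ hν)
  obtain ⟨σ, hσ⟩ := exists_perm_apply_pi_single hmap hf
  have hpush : ∀ μ : X → ℝ≥0∞, (∑' x, μ x = 1) → f μ = μ ∘ σ.symm := fun _ hμ =>
    apply_eq_comp_symm_of_apply_pi_single hmap hf hσ hμ
  refine ⟨fun ν hν => ?_, σ, fun μ hμ => congrFun (hpush μ hμ)⟩
  have hνσ : ∑' x, (ν ∘ σ) x = 1 := (σ.tsum_eq ν).trans hν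
  exact ⟨ν ∘ σ, hνσ, by rw [hpush _ hνσ, comp_assoc, σ.self_comp_symm, comp_id]⟩

/-- If X is finite (with at least two points, discrete metric), then every
isometric embedding of the 1-Wasserstein space over X is surjective, hence induced by a
permutation of X (a pushforward by a bijection of X). -/
theorem finite_embedding_is_surjective {X : Type*} [Fintype X] [DecidableEq X] [Nontrivial X]
    (f : (X → ℝ≥0∞) → (X → ℝ≥0∞))
    (hmap : ∀ μ : X → ℝ≥0∞, (∑' x, μ x = 1) → ∑' x, f μ x = 1)
    (hiso : ∀ μ ν : X → ℝ≥0∞, (∑' x, μ x = 1) → (∑' x, ν x = 1) →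
      1 - ∑' x, min (f μ x) (f ν x) = 1 - ∑' x, min (μ x) (ν x)) :
    Set.SurjOn f {μ | ∑' x, μ x = 1} {μ | ∑' x, μ x = 1} ∧
    ∃ σ : Equiv.Perm X, ∀ μ : X → ℝ≥0∞, (∑' x, μ x = 1) →
      ∀ x : X, f μ x = μ (σ.symm x) :=
  finite_embedding_is_surjective_general f hmap hiso
end

section
/- Let f be an isometric embedding of the 1-Wasserstein space over a countable discrete metric space X. For probability measures μ, ν and any x ∈ S_μ ∩ S_ν, the pointwise minimum of the restrictions of f(μ) and f(ν) to S_{f(δ_x)} has total mass min(μ({x}), ν({x})), i.e., (f(μ)|_{S_{f(δ_x)}} ∧ f(ν)|_{S_{f(δ_x)}})(X) = min(f(μ)|_{S_{f(δ_x)}}(X), f(ν)|_{S_{f(δ_x)}}(X)). -/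
/-!
Write `⟪μ, ν⟫ = ∑ min (μ y) (ν y)`, so that `W₁(μ, ν) = 1 - ⟪μ, ν⟫` and `f` preserves `⟪·, ·⟫`.
Since `⟪δ_x, δ_y⟫ = 0` for `x ≠ y`, the supports `S_x` of `f δ_x` are pairwise disjoint,
and `μ x = ⟪μ, δ_x⟫ = ⟪f μ, f δ_x⟫ ≤ f μ (S_x)`. Summing over `x`, both sides have total
mass `1`, so `f μ (S_x) = μ x` and `f μ` is carried by `⋃ S_x`. The same squeeze applied to
`m_x = (f μ ∧ f ν)(S_x) ≤ min (μ x) (ν x)`, whose sum over `x` is `⟪f μ, f ν⟫ = ⟪μ, ν⟫`,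
gives `m_x = min (μ x) (ν x)`.
-/

open scoped ENNReal
open Function Set

theorem ENNReal.eq_of_le_of_tsum_le {ι : Type*} {a b : ι → ℝ≥0∞} (hle : a ≤ b)
    (hsum : ∑' i, b i ≤ ∑' i, a i) (hfin : ∑' i, a i ≠ ∞) : a = b := by
  by_contra hne
  obtain ⟨i, hi⟩ := Function.ne_iff.mp hne
  exact (ENNReal.tsum_lt_tsum hfin hle ((hle i).lt_of_ne hi)).not_ge hsum

theorem tsum_indicator_apply_of_pairwise_disjoint {ι α M : Type*} [AddCommMonoid M]
    [TopologicalSpace M] {S : ι → Set α} (hS : Pairwise (Disjoint on S)) (g : α → M) (w : α) :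
    ∑' i, (S i).indicator g w = (⋃ i, S i).indicator g w := by
  by_cases hw : w ∈ ⋃ i, S i
  · obtain ⟨i, hi⟩ := mem_iUnion.mp hw
    rw [indicator_of_mem hw, tsum_eq_single i, indicator_of_mem hi]
    exact fun j hji => indicator_of_notMem (disjoint_left.mp (hS hji.symm) hi) g
  · rw [indicator_of_notMem hw, ← tsum_zero]
    exact tsum_congr fun i => indicator_of_notMem (fun hi => hw (mem_iUnion_of_mem i hi)) g

theorem ENNReal.tsum_tsum_indicator_of_pairwise_disjoint {ι α : Type*} {S : ι → Set α}
    (hS : Pairwise (Disjoint on S)) (g : α → ℝ≥0∞) :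
    ∑' i, ∑' w, (S i).indicator g w = ∑' w, (⋃ i, S i).indicator g w := by
  rw [ENNReal.tsum_comm]
  exact tsum_congr (tsum_indicator_apply_of_pairwise_disjoint hS g)

theorem ENNReal.tsum_min_le_tsum_indicator_support {α : Type*} (a b : α → ℝ≥0∞) :
    ∑' w, min (a w) (b w) ≤ ∑' w, (support b).indicator a w := by
  refine ENNReal.tsum_le_tsum fun w => ?_
  by_cases hw : w ∈ support b
  · rw [indicator_of_mem hw]
    exact min_le_left _ _
  · rw [notMem_support.mp hw, min_zero]
    exact zero_le

theorem ENNReal.tsum_min_single_one {α : Type*} [DecidableEq α] {μ : α → ℝ≥0∞} {x : α}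
    (hx : μ x ≤ 1) : ∑' w, min (μ w) ((Pi.single x 1 : α → ℝ≥0∞) w) = μ x := by
  rw [tsum_eq_single x fun w hw => by simp [hw]]
  simpa using hx

/-- On probability vectors, `W₁` for the discrete metric is `1 - ∑ min`, so an isometry is
a map preserving `∑ min`. -/
structure IsOverlapIsometry {X : Type*} (f : (X → ℝ≥0∞) → X → ℝ≥0∞) : Prop where
  tsum_eq_one : ∀ μ, ∑' x, μ x = 1 → ∑' x, f μ x = 1
  tsum_min_eq : ∀ μ ν, ∑' x, μ x = 1 → ∑' x, ν x = 1 →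
    ∑' x, min (f μ x) (f ν x) = ∑' x, min (μ x) (ν x)

namespace IsOverlapIsometry

variable {X : Type*} {f : (X → ℝ≥0∞) → X → ℝ≥0∞}

theorem of_one_sub
    (hmap : ∀ μ : X → ℝ≥0∞, (∑' x, μ x = 1) → ∑' x, f μ x = 1)
    (hiso : ∀ μ ν : X → ℝ≥0∞, (∑' x, μ x = 1) → (∑' x, ν x = 1) →
      1 - ∑' x, min (f μ x) (f ν x) = 1 - ∑' x, min (μ x) (ν x)) :
    IsOverlapIsometry f where
  tsum_eq_one := hmap
  tsum_min_eq μ ν hμ hν := by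
    have hle_one {a b : X → ℝ≥0∞} (ha : ∑' x, a x = 1) : ∑' x, min (a x) (b x) ≤ 1 :=
      ha ▸ ENNReal.tsum_le_tsum fun x => min_le_left _ _
    rw [← ENNReal.sub_sub_cancel ENNReal.one_ne_top (hle_one (hmap μ hμ)),
      ← ENNReal.sub_sub_cancel ENNReal.one_ne_top (hle_one hμ), hiso μ ν hμ hν]

variable [DecidableEq X] (hf : IsOverlapIsometry f)
include hf

theorem pairwise_disjoint_support_single :
    Pairwise (Disjoint on fun x : X => support (f (Pi.single x 1))) := by
  intro x y hxy
  have hzero : ∑' w, min (f (Pi.single x 1) w) (f (Pi.single y 1) w) = 0 := by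
    rw [hf.tsum_min_eq _ _ (tsum_pi_single x 1) (tsum_pi_single y 1), ENNReal.tsum_eq_zero]
    intro w
    by_cases hw : w = x <;> simp [Pi.single_apply, hw, hxy]
  refine disjoint_left.mpr fun w hwx hwy => ?_
  rcases min_eq_bot.mp (ENNReal.tsum_eq_zero.mp hzero w) with h | h
  exacts [hwx h, hwy h]

theorem tsum_indicator_support_single {μ : X → ℝ≥0∞} (hμ : ∑' y, μ y = 1) (x : X) :
    ∑' w, (support (f (Pi.single x 1))).indicator (f μ) w = μ x := by
  have hlower : μ ≤ fun x => ∑' w, (support (f (Pi.single x 1))).indicator (f μ) w := by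
    intro x
    calc μ x = ∑' w, min (f μ w) (f (Pi.single x 1) w) := by
          rw [hf.tsum_min_eq _ _ hμ (tsum_pi_single x 1),
            ENNReal.tsum_min_single_one (hμ ▸ ENNReal.le_tsum x)]
      _ ≤ _ := ENNReal.tsum_min_le_tsum_indicator_support _ _
  have htotal : ∑' x, ∑' w, (support (f (Pi.single x 1))).indicator (f μ) w ≤ ∑' x, μ x := by
    rw [ENNReal.tsum_tsum_indicator_of_pairwise_disjoint hf.pairwise_disjoint_support_single, hμ,
      ← hf.tsum_eq_one μ hμ]
    exact ENNReal.tsum_le_tsum (indicator_le_self _ _)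
  exact (congrFun (ENNReal.eq_of_le_of_tsum_le hlower htotal (hμ ▸ ENNReal.one_ne_top)) x).symm

theorem support_subset_iUnion_support_single {μ : X → ℝ≥0∞} (hμ : ∑' y, μ y = 1) :
    support (f μ) ⊆ ⋃ x, support (f (Pi.single x 1)) := by
  have htotal : ∑' w, f μ w ≤ ∑' w, (⋃ x, support (f (Pi.single x 1))).indicator (f μ) w := by
    rw [← ENNReal.tsum_tsum_indicator_of_pairwise_disjoint hf.pairwise_disjoint_support_single,
      tsum_congr (hf.tsum_indicator_support_single hμ), hμ, hf.tsum_eq_one μ hμ]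
  have hfin : ∑' w, (⋃ x, support (f (Pi.single x 1))).indicator (f μ) w ≠ ∞ :=
    ne_top_of_le_ne_top (hf.tsum_eq_one μ hμ ▸ ENNReal.one_ne_top)
      (ENNReal.tsum_le_tsum (indicator_le_self _ _))
  exact indicator_eq_self.mp (ENNReal.eq_of_le_of_tsum_le (indicator_le_self _ _) htotal hfin)

theorem tsum_indicator_support_single_min {μ ν : X → ℝ≥0∞} (hμ : ∑' y, μ y = 1)
    (hν : ∑' y, ν y = 1) (x : X) :
    ∑' w, (support (f (Pi.single x 1))).indicator (fun w => min (f μ w) (f ν w)) w =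
      min (μ x) (ν x) := by
  set S := fun x : X => support (f (Pi.single x 1))
  have hupper : (fun x => ∑' w, (S x).indicator (fun w => min (f μ w) (f ν w)) w) ≤
      fun x => min (μ x) (ν x) := by
    intro x
    dsimp only
    rw [← hf.tsum_indicator_support_single hμ x, ← hf.tsum_indicator_support_single hν x]
    exact le_min
      (ENNReal.tsum_le_tsum fun w => indicator_le_indicator (min_le_left (f μ w) (f ν w)))
      (ENNReal.tsum_le_tsum fun w => indicator_le_indicator (min_le_right (f μ w) (f ν w)))
  have hcarried : (⋃ x, S x).indicator (fun w => min (f μ w) (f ν w)) =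
      fun w => min (f μ w) (f ν w) := by
    refine indicator_eq_self.mpr fun w hw => hf.support_subset_iUnion_support_single hμ ?_
    exact fun hμw => hw (by simp only [hμw, zero_min])
  have htotal : ∑' x, min (μ x) (ν x) ≤
      ∑' x, ∑' w, (S x).indicator (fun w => min (f μ w) (f ν w)) w := by
    rw [ENNReal.tsum_tsum_indicator_of_pairwise_disjoint hf.pairwise_disjoint_support_single,
      hcarried, hf.tsum_min_eq μ ν hμ hν]
  have hfin : ∑' x, ∑' w, (S x).indicator (fun w => min (f μ w) (f ν w)) w ≠ ∞ :=
    ne_top_of_le_ne_top (hμ ▸ ENNReal.one_ne_top)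
      ((ENNReal.tsum_le_tsum hupper).trans (ENNReal.tsum_le_tsum fun x => min_le_left _ _))
  exact congrFun (ENNReal.eq_of_le_of_tsum_le hupper htotal hfin) x

end IsOverlapIsometry

theorem min_of_restrictions_mass_general {X : Type*} [DecidableEq X]
    (f : (X → ℝ≥0∞) → (X → ℝ≥0∞))
    (hmap : ∀ μ : X → ℝ≥0∞, (∑' x, μ x = 1) → ∑' x, f μ x = 1)
    (hiso : ∀ μ ν : X → ℝ≥0∞, (∑' x, μ x = 1) → (∑' x, ν x = 1) →
      1 - ∑' x, min (f μ x) (f ν x) = 1 - ∑' x, min (μ x) (ν x))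
    (μ ν : X → ℝ≥0∞) (hμ : ∑' x, μ x = 1) (hν : ∑' x, ν x = 1)
    (x : X) :
    (∑' y : X, min
        (Set.indicator {z | 0 < f (fun w => if w = x then 1 else 0) z} (f μ) y)
        (Set.indicator {z | 0 < f (fun w => if w = x then 1 else 0) z} (f ν) y)
      = min (μ x) (ν x)) ∧
    (∑' y : X, min
        (Set.indicator {z | 0 < f (fun w => if w = x then 1 else 0) z} (f μ) y)
        (Set.indicator {z | 0 < f (fun w => if w = x then 1 else 0) z} (f ν) y)
      = min
        (∑' y : X, Set.indicator {z | 0 < f (fun w => if w = x then 1 else 0) z} (f μ) y)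
        (∑' y : X, Set.indicator {z | 0 < f (fun w => if w = x then 1 else 0) z} (f ν) y)) := by
  have hf := IsOverlapIsometry.of_one_sub hmap hiso
  have hsingle : (fun w => if w = x then 1 else 0) = (Pi.single x 1 : X → ℝ≥0∞) := by
    ext w
    simp [Pi.single_apply]
  have hS : {z | 0 < f (fun w => if w = x then 1 else 0) z} = support (f (Pi.single x 1)) := by
    ext z
    simp [hsingle, pos_iff_ne_zero]
  have hmin (s : Set X) (y : X) :
      min (s.indicator (f μ) y) (s.indicator (f ν) y) =
        s.indicator (fun w => min (f μ w) (f ν w)) y := by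
    by_cases hy : y ∈ s <;> simp [hy]
  simp only [hS, hmin, hf.tsum_indicator_support_single_min hμ hν,
    hf.tsum_indicator_support_single hμ, hf.tsum_indicator_support_single hν, and_self]

/-- For an isometric embedding f of the 1-Wasserstein space over a countable
discrete metric space X, for probability measures μ, ν and x ∈ S_μ ∩ S_ν, the pointwise
minimum of the restrictions of f(μ) and f(ν) to S_{f(δ_x)} has total mass
min(μ({x}), ν({x})) = min(f(μ)|_{S_{f(δ_x)}}(X), f(ν)|_{S_{f(δ_x)}}(X)). -/
theorem min_of_restrictions_mass {X : Type*} [Countable X] [DecidableEq X]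
    (f : (X → ℝ≥0∞) → (X → ℝ≥0∞))
    (hmap : ∀ μ : X → ℝ≥0∞, (∑' x, μ x = 1) → ∑' x, f μ x = 1)
    (hiso : ∀ μ ν : X → ℝ≥0∞, (∑' x, μ x = 1) → (∑' x, ν x = 1) →
      1 - ∑' x, min (f μ x) (f ν x) = 1 - ∑' x, min (μ x) (ν x))
    (μ ν : X → ℝ≥0∞) (hμ : ∑' x, μ x = 1) (hν : ∑' x, ν x = 1)
    (x : X) (hxμ : 0 < μ x) (hxν : 0 < ν x) :
    (∑' y : X, min
        (Set.indicator {z | 0 < f (fun w => if w = x then 1 else 0) z} (f μ) y)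
        (Set.indicator {z | 0 < f (fun w => if w = x then 1 else 0) z} (f ν) y)
      = min (μ x) (ν x)) ∧
    (∑' y : X, min
        (Set.indicator {z | 0 < f (fun w => if w = x then 1 else 0) z} (f μ) y)
        (Set.indicator {z | 0 < f (fun w => if w = x then 1 else 0) z} (f ν) y)
      = min
        (∑' y : X, Set.indicator {z | 0 < f (fun w => if w = x then 1 else 0) z} (f μ) y)
        (∑' y : X, Set.indicator {z | 0 < f (fun w => if w = x then 1 else 0) z} (f ν) y)) :=
  min_of_restrictions_mass_general f hmap hiso μ ν hμ hν x
end
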